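/- arXiv:2101.02967 — 2 statements merged into one kernel-verified Lean document; each statement's English description precedes it below -/
import Mathlib

section
/- The Casimir element J₁ acts as zero in the representation ρ₁₀: as an operator identity on D, 2·ρ(H₃)² + ρ(H₊)ρ(H₋) + ρ(H₋)ρ(H₊) − 2·ρ(F₃)² − ρ(F₊)ρ(F₋) − ρ(F₋)ρ(F₊) = 0. -/
noncomputable section

/-- The index set `S = {(ℓ,m) : 1 ≤ ℓ, |m| ≤ ℓ}` of the orthonormal basis of `D`. -/
abbrev inS (p : ℤ × ℤ) : Prop := 1 ≤ p.1 ∧ |p.2| ≤ p.1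

/-- The ambient space of finitely supported families; the representation space `D`
is the subspace of families supported in `S`. -/
abbrev V := (ℤ × ℤ) →₀ ℂ

/-- The basis vector `ξ_{ℓ,m}`, with the convention `ξ_{ℓ,m} = 0` for `(ℓ,m) ∉ S`. -/
def ξ (ℓ m : ℤ) : V := if inS (ℓ, m) then Finsupp.single (ℓ, m) 1 else 0

/-- `C ℓ = i √(ℓ²-1) / √(4ℓ²-1)`. -/
def C (ℓ : ℤ) : ℂ := Complex.I * (Real.sqrt ((ℓ : ℝ) ^ 2 - 1) / Real.sqrt (4 * (ℓ : ℝ) ^ 2 - 1))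

/-- Real square root of an integer, viewed as a complex number. -/
def csqrt (a : ℤ) : ℂ := ((Real.sqrt (a : ℝ) : ℝ) : ℂ)

/-- Build a linear operator on `V` from its values on the basis vectors `ξ_{ℓ,m}`,
`(ℓ,m) ∈ S` (and `0` on basis vectors outside `S`). -/
def mkOp (f : ℤ → ℤ → V) : V →ₗ[ℂ] V :=
  Finsupp.lsum ℂ fun p => LinearMap.toSpanSingleton ℂ V (if inS p then f p.1 p.2 else 0)

/-- `ρ(H₃) ξ_{ℓ,m} = m ξ_{ℓ,m}`. -/
def rhoH3 : V →ₗ[ℂ] V := mkOp fun ℓ m => (m : ℂ) • ξ ℓ m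

/-- `ρ(H₊) ξ_{ℓ,m} = √((ℓ-m)(ℓ+m+1)) ξ_{ℓ,m+1}`. -/
def rhoHp : V →ₗ[ℂ] V := mkOp fun ℓ m => csqrt ((ℓ - m) * (ℓ + m + 1)) • ξ ℓ (m + 1)

/-- `ρ(H₋) ξ_{ℓ,m} = √((ℓ+m)(ℓ-m+1)) ξ_{ℓ,m-1}`. -/
def rhoHm : V →ₗ[ℂ] V := mkOp fun ℓ m => csqrt ((ℓ + m) * (ℓ - m + 1)) • ξ ℓ (m - 1)

/-- `ρ(F₃) ξ_{ℓ,m} = C_ℓ √(ℓ²-m²) ξ_{ℓ-1,m} - C_{ℓ+1} √((ℓ+1)²-m²) ξ_{ℓ+1,m}`. -/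
def rhoF3 : V →ₗ[ℂ] V := mkOp fun ℓ m =>
  (C ℓ * csqrt (ℓ ^ 2 - m ^ 2)) • ξ (ℓ - 1) m
    - (C (ℓ + 1) * csqrt ((ℓ + 1) ^ 2 - m ^ 2)) • ξ (ℓ + 1) m

/-- `ρ(F₊) ξ_{ℓ,m} = C_ℓ √((ℓ-m)(ℓ-m-1)) ξ_{ℓ-1,m+1} + C_{ℓ+1} √((ℓ+m+1)(ℓ+m+2)) ξ_{ℓ+1,m+1}`. -/
def rhoFp : V →ₗ[ℂ] V := mkOp fun ℓ m =>
  (C ℓ * csqrt ((ℓ - m) * (ℓ - m - 1))) • ξ (ℓ - 1) (m + 1)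
    + (C (ℓ + 1) * csqrt ((ℓ + m + 1) * (ℓ + m + 2))) • ξ (ℓ + 1) (m + 1)

/-- `ρ(F₋) ξ_{ℓ,m} = -C_ℓ √((ℓ+m)(ℓ+m-1)) ξ_{ℓ-1,m-1} - C_{ℓ+1} √((ℓ-m+1)(ℓ-m+2)) ξ_{ℓ+1,m-1}`. -/
def rhoFm : V →ₗ[ℂ] V := mkOp fun ℓ m =>
  -((C ℓ * csqrt ((ℓ + m) * (ℓ + m - 1))) • ξ (ℓ - 1) (m - 1))
    - (C (ℓ + 1) * csqrt ((ℓ - m + 1) * (ℓ - m + 2))) • ξ (ℓ + 1) (m - 1)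

/-- The inner product on `D` making `(ξ_{ℓ,m})` orthonormal. -/
def inn (φ ψ : V) : ℂ := ∑' p : ℤ × ℤ, (starRingEnd ℂ) (φ p) * ψ p

/-! `J₁` is the difference of `2H₃² + H₊H₋ + H₋H₊` and `2F₃² + F₊F₋ + F₋F₊`, and both act on
`ξ_{ℓ,m}` as the scalar `2ℓ(ℓ+1)`. For the first this is the familiar `so(3)` computation. The
second a priori also moves `ξ_{ℓ,m}` to `ξ_{ℓ±2,m}`, but those contributions cancel because
`√(ℓ²-m²)·√((ℓ-1)²-m²) = √((ℓ+m)(ℓ+m-1))·√((ℓ-m)(ℓ-m-1))`; its diagonal part is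
`2ℓ(ℓ+1)` by `C_ℓ²(4ℓ²-1) = 1-ℓ²`. -/

lemma mkOp_single (f : ℤ → ℤ → V) (p : ℤ × ℤ) (b : ℂ) :
    mkOp f (Finsupp.single p b) = b • if inS p then f p.1 p.2 else 0 := by
  simp [mkOp]

lemma mkOp_single_of_not_inS (f : ℤ → ℤ → V) {p : ℤ × ℤ} (hp : ¬ inS p) (b : ℂ) :
    mkOp f (Finsupp.single p b) = 0 := by
  simp [mkOp_single, hp]

lemma ξ_eq_zero {ℓ m : ℤ} (h : ¬ inS (ℓ, m)) : ξ ℓ m = 0 := if_neg h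

lemma mkOp_ξ {f : ℤ → ℤ → V} (hf : ∀ ℓ m, ¬ inS (ℓ, m) → f ℓ m = 0) (ℓ m : ℤ) :
    mkOp f (ξ ℓ m) = f ℓ m := by
  by_cases h : inS (ℓ, m)
  · rw [ξ, if_pos h, mkOp_single, if_pos h, one_smul]
  · rw [ξ_eq_zero h, map_zero, hf ℓ m h]

lemma smul_ξ_eq_zero {c : ℂ} {ℓ m : ℤ} (h : inS (ℓ, m) → c = 0) : c • ξ ℓ m = 0 := by
  by_cases hS : inS (ℓ, m)
  · rw [h hS, zero_smul]
  · rw [ξ_eq_zero hS, smul_zero]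

lemma csqrt_zero : csqrt 0 = 0 := by simp [csqrt]

lemma csqrt_sq {a : ℤ} (ha : 0 ≤ a) : csqrt a ^ 2 = a := by
  rw [csqrt, ← Complex.ofReal_pow, Real.sq_sqrt (by exact_mod_cast ha)]
  simp

lemma csqrt_mul_csqrt_eq {a b c d : ℤ} (ha : 0 ≤ a) (hc : 0 ≤ c) (h : a * b = c * d) :
    csqrt a * csqrt b = csqrt c * csqrt d := by
  simp only [csqrt, ← Complex.ofReal_mul, ← Real.sqrt_mul (Int.cast_nonneg ha),
    ← Real.sqrt_mul (Int.cast_nonneg hc), ← Int.cast_mul, h]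

lemma C_one : C 1 = 0 := by simp [C]

lemma C_sq_mul {ℓ : ℤ} (hℓ : ℓ ≠ 0) : C ℓ ^ 2 * (4 * ℓ ^ 2 - 1) = 1 - ℓ ^ 2 := by
  have h1 : (1 : ℝ) ≤ (ℓ : ℝ) ^ 2 := by
    exact_mod_cast (one_le_sq_iff_one_le_abs _).2 (Int.one_le_abs hℓ)
  have h4 : (4 * (ℓ : ℂ) ^ 2 - 1) ≠ 0 := by
    exact_mod_cast (by linarith : (4 * (ℓ : ℝ) ^ 2 - 1) ≠ 0)
  rw [C, mul_pow, Complex.I_sq, div_pow, ← Complex.ofReal_pow, ← Complex.ofReal_pow,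
    Real.sq_sqrt (by linarith), Real.sq_sqrt (by linarith)]
  push_cast
  rw [mul_assoc, div_mul_cancel₀ _ h4]
  ring

lemma C_succ_mul_csqrt_mul_eq_zero {ℓ a b : ℤ} (h : ℓ = 0 ∨ a = 0 ∨ b = 0) :
    C (ℓ + 1) * csqrt (a * b) = 0 := by
  rcases h with rfl | rfl | rfl <;> simp [C_one, csqrt_zero]

lemma rhoH3_ξ (ℓ m : ℤ) : rhoH3 (ξ ℓ m) = (m : ℂ) • ξ ℓ m :=
  mkOp_ξ (fun _ _ h => by rw [ξ_eq_zero h, smul_zero]) ℓ m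

lemma rhoHp_ξ (ℓ m : ℤ) :
    rhoHp (ξ ℓ m) = csqrt ((ℓ - m) * (ℓ + m + 1)) • ξ ℓ (m + 1) := by
  refine mkOp_ξ (fun ℓ m h => smul_ξ_eq_zero fun h' => ?_) ℓ m
  rw [show ℓ + m + 1 = 0 by grind, mul_zero, csqrt_zero]

lemma rhoHm_ξ (ℓ m : ℤ) :
    rhoHm (ξ ℓ m) = csqrt ((ℓ + m) * (ℓ - m + 1)) • ξ ℓ (m - 1) := by
  refine mkOp_ξ (fun ℓ m h => smul_ξ_eq_zero fun h' => ?_) ℓ m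
  rw [show ℓ - m + 1 = 0 by grind, mul_zero, csqrt_zero]

lemma rhoF3_ξ (ℓ m : ℤ) : rhoF3 (ξ ℓ m) =
    (C ℓ * csqrt (ℓ ^ 2 - m ^ 2)) • ξ (ℓ - 1) m
      - (C (ℓ + 1) * csqrt ((ℓ + 1) ^ 2 - m ^ 2)) • ξ (ℓ + 1) m := by
  refine mkOp_ξ (fun ℓ m h => ?_) ℓ m
  rw [smul_ξ_eq_zero fun _ => absurd (by grind) h, zero_sub, neg_eq_zero, sq_sub_sq]
  exact smul_ξ_eq_zero fun _ => C_succ_mul_csqrt_mul_eq_zero (by grind)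

lemma rhoFp_ξ (ℓ m : ℤ) : rhoFp (ξ ℓ m) =
    (C ℓ * csqrt ((ℓ - m) * (ℓ - m - 1))) • ξ (ℓ - 1) (m + 1)
      + (C (ℓ + 1) * csqrt ((ℓ + m + 1) * (ℓ + m + 2))) • ξ (ℓ + 1) (m + 1) := by
  refine mkOp_ξ (fun ℓ m h => ?_) ℓ m
  rw [smul_ξ_eq_zero fun _ => absurd (by grind) h, zero_add]
  exact smul_ξ_eq_zero fun _ => C_succ_mul_csqrt_mul_eq_zero (by grind)

lemma rhoFm_ξ (ℓ m : ℤ) : rhoFm (ξ ℓ m) =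
    -((C ℓ * csqrt ((ℓ + m) * (ℓ + m - 1))) • ξ (ℓ - 1) (m - 1))
      - (C (ℓ + 1) * csqrt ((ℓ - m + 1) * (ℓ - m + 2))) • ξ (ℓ + 1) (m - 1) := by
  refine mkOp_ξ (fun ℓ m h => ?_) ℓ m
  rw [smul_ξ_eq_zero fun _ => absurd (by grind) h, neg_zero, zero_sub, neg_eq_zero]
  exact smul_ξ_eq_zero fun _ => C_succ_mul_csqrt_mul_eq_zero (by grind)

def rotationCasimir : V →ₗ[ℂ] V := (2 : ℂ) • (rhoH3 ∘ₗ rhoH3) + rhoHp ∘ₗ rhoHm + rhoHm ∘ₗ rhoHp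

def boostCasimir : V →ₗ[ℂ] V := (2 : ℂ) • (rhoF3 ∘ₗ rhoF3) + rhoFp ∘ₗ rhoFm + rhoFm ∘ₗ rhoFp

lemma rotationCasimir_ξ {ℓ m : ℤ} (h : inS (ℓ, m)) :
    rotationCasimir (ξ ℓ m) = (2 * ℓ * (ℓ + 1) : ℂ) • ξ ℓ m := by
  obtain ⟨-, hm⟩ := h
  rw [abs_le] at hm
  calc rotationCasimir (ξ ℓ m)
      = (2 * m ^ 2 + csqrt ((ℓ + m) * (ℓ - m + 1)) ^ 2 + csqrt ((ℓ - m) * (ℓ + m + 1)) ^ 2 : ℂ)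
          • ξ ℓ m := by
        simp only [rotationCasimir, LinearMap.add_apply, LinearMap.smul_apply,
          LinearMap.comp_apply, rhoH3_ξ, rhoHp_ξ, rhoHm_ξ, map_smul]
        ring_nf
        module
    _ = (2 * ℓ * (ℓ + 1) : ℂ) • ξ ℓ m := by
        rw [csqrt_sq (by nlinarith), csqrt_sq (by nlinarith)]
        congr 1
        push_cast
        ring

lemma boostCasimir_ξ_expand (ℓ m : ℤ) : boostCasimir (ξ ℓ m) =
    (2 * C ℓ * C (ℓ - 1) * (csqrt (ℓ ^ 2 - m ^ 2) * csqrt ((ℓ - 1) ^ 2 - m ^ 2)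
        - csqrt ((ℓ + m) * (ℓ + m - 1)) * csqrt ((ℓ - m) * (ℓ - m - 1)))) • ξ (ℓ - 2) m
    - (C ℓ ^ 2 * (2 * csqrt (ℓ ^ 2 - m ^ 2) ^ 2 + csqrt ((ℓ + m) * (ℓ + m - 1)) ^ 2
          + csqrt ((ℓ - m) * (ℓ - m - 1)) ^ 2)
        + C (ℓ + 1) ^ 2 * (2 * csqrt ((ℓ + 1) ^ 2 - m ^ 2) ^ 2
          + csqrt ((ℓ - m + 1) * (ℓ - m + 2)) ^ 2 + csqrt ((ℓ + m + 1) * (ℓ + m + 2)) ^ 2))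
        • ξ ℓ m
    + (2 * C (ℓ + 1) * C (ℓ + 2) * (csqrt ((ℓ + 1) ^ 2 - m ^ 2) * csqrt ((ℓ + 2) ^ 2 - m ^ 2)
        - csqrt ((ℓ - m + 1) * (ℓ - m + 2)) * csqrt ((ℓ + m + 1) * (ℓ + m + 2)))) • ξ (ℓ + 2) m := by
  simp only [boostCasimir, LinearMap.add_apply, LinearMap.smul_apply, LinearMap.comp_apply,
    rhoF3_ξ, rhoFp_ξ, rhoFm_ξ, map_add, map_sub, map_neg, map_smul]
  ring_nf
  module

lemma C_sq_weighted_sum {ℓ : ℤ} (h₀ : ℓ ≠ 0) (h₁ : ℓ + 1 ≠ 0) :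
    -(C ℓ ^ 2 * (2 * ℓ * (2 * ℓ - 1)) + C (ℓ + 1) ^ 2 * (2 * (ℓ + 1) * (2 * ℓ + 3)))
      = (2 * ℓ * (ℓ + 1) : ℂ) := by
  have e₀ := C_sq_mul h₀
  have e₁ := C_sq_mul h₁
  push_cast at e₁
  have h₂ : (2 * ℓ + 1 : ℂ) ≠ 0 := by exact_mod_cast (by omega : 2 * ℓ + 1 ≠ 0)
  refine mul_left_cancel₀ h₂ ?_
  linear_combination (-2 * ℓ : ℂ) * e₀ - 2 * (ℓ + 1 : ℂ) * e₁

lemma boostCasimir_ξ {ℓ m : ℤ} (h : inS (ℓ, m)) :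
    boostCasimir (ξ ℓ m) = (2 * ℓ * (ℓ + 1) : ℂ) • ξ ℓ m := by
  obtain ⟨hℓ, hm⟩ := h
  rw [abs_le] at hm
  have consecutive (a : ℤ) : 0 ≤ a * (a - 1) := by nlinarith [Int.le_self_sq a]
  have down : csqrt (ℓ ^ 2 - m ^ 2) * csqrt ((ℓ - 1) ^ 2 - m ^ 2)
      = csqrt ((ℓ + m) * (ℓ + m - 1)) * csqrt ((ℓ - m) * (ℓ - m - 1)) :=
    csqrt_mul_csqrt_eq (by nlinarith) (consecutive _) (by ring)
  have up : csqrt ((ℓ + 1) ^ 2 - m ^ 2) * csqrt ((ℓ + 2) ^ 2 - m ^ 2)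
      = csqrt ((ℓ - m + 1) * (ℓ - m + 2)) * csqrt ((ℓ + m + 1) * (ℓ + m + 2)) :=
    csqrt_mul_csqrt_eq (by nlinarith) (by nlinarith) (by ring)
  rw [boostCasimir_ξ_expand, down, up, sub_self, sub_self, mul_zero, mul_zero, zero_smul, zero_smul,
    zero_sub, add_zero, ← neg_smul]
  congr 1
  rw [csqrt_sq (by nlinarith), csqrt_sq (consecutive _), csqrt_sq (consecutive _),
    csqrt_sq (by nlinarith), csqrt_sq (by nlinarith), csqrt_sq (by nlinarith)]
  push_cast
  linear_combination C_sq_weighted_sum (ℓ := ℓ) (by omega) (by omega)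

lemma single_eq_smul_ξ {p : ℤ × ℤ} (hp : inS p) (b : ℂ) :
    Finsupp.single p b = b • ξ p.1 p.2 := by
  simp [ξ, hp]

lemma rotationCasimir_eq_boostCasimir : rotationCasimir = boostCasimir := by
  refine Finsupp.lhom_ext fun p b => ?_
  by_cases hp : inS p
  · rw [single_eq_smul_ξ hp, map_smul, map_smul, rotationCasimir_ξ hp, boostCasimir_ξ hp]
  · simp [rotationCasimir, boostCasimir, rhoH3, rhoHp, rhoHm, rhoF3, rhoFp, rhoFm,
      mkOp_single_of_not_inS _ hp]

/-- The Casimir element `J₁ = 2H₃² + H₊H₋ + H₋H₊ - 2F₃² - F₊F₋ - F₋F₊` acts as zero in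
the representation `ρ₁₀` (corresponding to the scalar `ℓ₀² + ℓ₁² - 1` with
`ℓ₀ = 1, ℓ₁ = 0`). -/
theorem casimir_J1_acts_as_zero :
    (2 : ℂ) • (rhoH3 ∘ₗ rhoH3) + rhoHp ∘ₗ rhoHm + rhoHm ∘ₗ rhoHp
      - (2 : ℂ) • (rhoF3 ∘ₗ rhoF3) - rhoFp ∘ₗ rhoFm - rhoFm ∘ₗ rhoFp = 0 := by
  convert sub_eq_zero.2 rotationCasimir_eq_boostCasimir using 1
  rw [rotationCasimir, boostCasimir]
  abel

end
end

section
/- Let x : S → ℂ be a square-summable family (∑_{(ℓ,m)∈S}|x_{ℓ,m}|² < ∞) satisfying, coefficientwise, ρ(F₋)x = 0, i.e., for all integers ℓ ≥ 1 and m with |m| ≤ ℓ: C_{ℓ+1}·√((ℓ+m+1)(ℓ+m+2))·x_{ℓ+1,m+1} + C_ℓ·√((ℓ−m−1)(ℓ−m))·x_{ℓ−1,m+1} = 0 (with x_{ℓ',m'} := 0 for (ℓ',m') ∉ S). Then x = λ·ξ⁺ for some λ ∈ ℂ, where ξ⁺ is the family supported on {(ℓ,1) : ℓ ≥ 1} with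 coefficients x₁ = 1, x₂ = 0, x_{ℓ+1} = −(C_ℓ·√((ℓ−1)ℓ))/(C_{ℓ+1}·√((ℓ+1)(ℓ+2)))·x_{ℓ−1} for ℓ ≥ 2. In particular, the space of square-summable solutions of ρ(F₋)x = 0 is one-dimensional. -/
/-!
The relation attached to `(ℓ, m)` only involves column `m + 1`, where it links the entries in
rows `n` and `n + 2`, and the coefficient of `x (n + 2, m)` is nonzero once `n + m ≥ 0`.
In a column `m ≥ 2` the entries below the support vanish, so the recursion makes the whole
column vanish. In column `1` the recursion is the one defining `ξ⁺`, started from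
`x (0, 1) = 0` and `x (1, 1)`. In a column `m ≤ 0` the recursion runs the other way:
since `‖C n‖` increases and `(n+m+1)(n+m+2) ≤ (n-m+1)(n-m+2)`, the quantity
`‖C n‖ * ‖x (n, m)‖` is nondecreasing along `n, n + 2, n + 4, …`, while square-summability
forces it to tend to `0`; so it vanishes, and `C n ≠ 0` for `n ≥ 2` leaves only row `1`, which
one more relation kills.
-/

noncomputable section

/-- The coefficients of the highest weight vector `ξ⁺`: `xp 1 = 1`, `xp 2 = 0`, and
`xp (ℓ+1) = -(C_ℓ √((ℓ-1)ℓ))/(C_{ℓ+1} √((ℓ+1)(ℓ+2))) · xp (ℓ-1)` for `ℓ ≥ 2`. -/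
def xp : ℕ → ℂ
  | 0 => 0
  | 1 => 1
  | 2 => 0
  | (n + 3) =>
      -(C ((n : ℤ) + 2) * csqrt (((n : ℤ) + 1) * ((n : ℤ) + 2))) /
          (C ((n : ℤ) + 3) * csqrt (((n : ℤ) + 3) * ((n : ℤ) + 4))) * xp (n + 1)

/-- The family `ξ⁺` supported on `{(ℓ,1) : ℓ ≥ 1}` with coefficients `xp ℓ`. -/
def xiplus : ℤ × ℤ → ℂ := fun p => if 1 ≤ p.1 ∧ p.2 = 1 then xp p.1.toNat else 0

open Filter Topology

lemma norm_csqrt (a : ℤ) : ‖csqrt a‖ = Real.sqrt a := by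
  simp [csqrt, Complex.norm_real, abs_of_nonneg, Real.sqrt_nonneg]

lemma csqrt_ne_zero {a : ℤ} (h : 0 < a) : csqrt a ≠ 0 := by
  simpa [csqrt, Real.sqrt_eq_zero'] using h

lemma norm_C (ℓ : ℤ) :
    ‖C ℓ‖ = Real.sqrt ((ℓ : ℝ) ^ 2 - 1) / Real.sqrt (4 * (ℓ : ℝ) ^ 2 - 1) := by
  rw [C, norm_mul, Complex.norm_I, one_mul, ← Complex.ofReal_div, Complex.norm_real,
    Real.norm_of_nonneg (by positivity)]

lemma C_ne_zero {ℓ : ℤ} (h : 2 ≤ ℓ) : C ℓ ≠ 0 := by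
  have hℓ : (2 : ℝ) ≤ ℓ := by exact_mod_cast h
  rw [← norm_ne_zero_iff, norm_C]
  exact (div_pos (Real.sqrt_pos.2 (by nlinarith)) (Real.sqrt_pos.2 (by nlinarith))).ne'

lemma norm_C_le_one (ℓ : ℤ) : ‖C ℓ‖ ≤ 1 := by
  rw [norm_C]
  exact div_le_one_of_le₀ (Real.sqrt_le_sqrt (by nlinarith)) (Real.sqrt_nonneg _)

lemma norm_C_le_norm_C_add_one {ℓ : ℤ} (h : 1 ≤ ℓ) : ‖C ℓ‖ ≤ ‖C (ℓ + 1)‖ := by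
  have hℓ : (1 : ℝ) ≤ ℓ := by exact_mod_cast h
  rw [norm_C, norm_C, Int.cast_add, Int.cast_one,
    div_le_div_iff₀ (Real.sqrt_pos.2 (by nlinarith)) (Real.sqrt_pos.2 (by nlinarith)),
    ← Real.sqrt_mul (by nlinarith), ← Real.sqrt_mul (by nlinarith)]
  exact Real.sqrt_le_sqrt (by nlinarith)

lemma tendsto_norm_comp_of_summable_sq {α E : Type*} [SeminormedAddCommGroup E] {x : α → E}
    (hx : Summable fun p => ‖x p‖ ^ 2) {f : ℕ → α} (hf : f.Injective) :
    Tendsto (fun j => ‖x (f j)‖) atTop (𝓝 0) := by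
  simpa using ((hx.comp_injective hf).tendsto_atTop_zero).sqrt

-- Stated in the shape that `FminusEqZero.apply_add_two` takes at `m = 1`.
lemma xp_toNat_add_two {k : ℤ} (hk : 0 ≤ k) :
    xp (k + 2).toNat = -(C (k + 1) * csqrt ((k - 1 + 1) * (k - 1 + 2))) /
      (C (k + 2) * csqrt ((k + 1 + 1) * (k + 1 + 2))) * xp k.toNat := by
  lift k to ℕ using hk
  rcases k with _ | j
  · simp [xp]
  · rw [show ((j + 1 : ℕ) + 2 : ℤ).toNat = j + 3 by omega, Int.toNat_natCast, xp]
    push_cast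
    ring_nf

lemma xiplus_apply_one (n : ℤ) : xiplus (n, 1) = xp n.toNat := by
  by_cases hn : 1 ≤ n
  · simp [xiplus, hn]
  · simp [xiplus, hn, Int.toNat_of_nonpos (by omega : n ≤ 0), xp]

lemma xiplus_of_ne_one {n m : ℤ} (hm : m ≠ 1) : xiplus (n, m) = 0 := by
  simp [xiplus, hm]

lemma apply_eq_zero_of_lt {x : ℤ × ℤ → ℂ} (hsupp : ∀ p : ℤ × ℤ, ¬ inS p → x p = 0)
    {n m : ℤ} (h : n < 1 ∨ n < m ∨ n < -m) : x (n, m) = 0 :=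
  hsupp _ fun ⟨h1, h2⟩ => by rw [abs_le] at h2; omega

/-- The coefficient of `ξ_{ℓ,m+1}` in `ρ(F₋)x` vanishes for all `(ℓ,m) ∈ S`. -/
def FminusEqZero (x : ℤ × ℤ → ℂ) : Prop :=
  ∀ ℓ m : ℤ, 1 ≤ ℓ → |m| ≤ ℓ →
    C (ℓ + 1) * csqrt ((ℓ + m + 1) * (ℓ + m + 2)) * x (ℓ + 1, m + 1)
      + C ℓ * csqrt ((ℓ - m - 1) * (ℓ - m)) * x (ℓ - 1, m + 1) = 0

namespace FminusEqZero

variable {x : ℤ × ℤ → ℂ}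

lemma column_relation (hx : FminusEqZero x) {n m : ℤ} (hn : 0 ≤ n) (hm : |m - 1| ≤ n + 1) :
    C (n + 2) * csqrt ((n + m + 1) * (n + m + 2)) * x (n + 2, m)
      + C (n + 1) * csqrt ((n - m + 1) * (n - m + 2)) * x (n, m) = 0 := by
  convert hx (n + 1) (m - 1) (by omega) hm using 4 <;> ring_nf

lemma apply_add_two (hx : FminusEqZero x) {n m : ℤ} (hn : 0 ≤ n) (hm : |m - 1| ≤ n + 1)
    (hnm : 0 ≤ n + m) :
    x (n + 2, m) = -(C (n + 1) * csqrt ((n - m + 1) * (n - m + 2))) /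
      (C (n + 2) * csqrt ((n + m + 1) * (n + m + 2))) * x (n, m) := by
  have hA : C (n + 2) * csqrt ((n + m + 1) * (n + m + 2)) ≠ 0 :=
    mul_ne_zero (C_ne_zero (by omega)) (csqrt_ne_zero (by positivity))
  rw [div_mul_eq_mul_div, eq_div_iff hA]
  linear_combination hx.column_relation hn hm

lemma apply_eq_zero_of_two_le (hx : FminusEqZero x)
    (hsupp : ∀ p : ℤ × ℤ, ¬ inS p → x p = 0) {m : ℤ} (hm : 2 ≤ m) (n : ℤ) :
    x (n, m) = 0 := by
  induction n using Int.strongRec (m := m) with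
  | lt n hn => exact apply_eq_zero_of_lt hsupp (by omega)
  | ge n hn ih =>
    obtain ⟨k, rfl⟩ : ∃ k, n = k + 2 := ⟨n - 2, by ring⟩
    rw [hx.apply_add_two (by omega) (abs_le.2 ⟨by omega, by omega⟩) (by omega), ih k (by omega),
      mul_zero]

lemma apply_one (hx : FminusEqZero x) (hsupp : ∀ p : ℤ × ℤ, ¬ inS p → x p = 0) (n : ℤ) :
    x (n, 1) = x (1, 1) * xp n.toNat := by
  induction n using Int.strongRec (m := 2) with
  | lt n hn =>
    obtain hn | rfl : n < 1 ∨ n = 1 := by omega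
    · rw [apply_eq_zero_of_lt hsupp (by omega), Int.toNat_of_nonpos (by omega), xp, mul_zero]
    · simp [xp]
  | ge n hn ih =>
    obtain ⟨k, rfl⟩ : ∃ k, n = k + 2 := ⟨n - 2, by ring⟩
    rw [hx.apply_add_two (by omega) (abs_le.2 ⟨by omega, by omega⟩) (by omega), ih k (by omega),
      xp_toNat_add_two (by omega)]
    ring

lemma norm_C_mul_norm_le (hx : FminusEqZero x) (hsupp : ∀ p : ℤ × ℤ, ¬ inS p → x p = 0)
    {n m : ℤ} (hn : 1 ≤ n) (hm : m ≤ 0) :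
    ‖C n‖ * ‖x (n, m)‖ ≤ ‖C (n + 2)‖ * ‖x (n + 2, m)‖ := by
  rcases lt_or_ge (n + m) 0 with hnm | hnm
  · rw [apply_eq_zero_of_lt hsupp (n := n) (m := m) (by omega), norm_zero, mul_zero]
    positivity
  have h := congrArg norm <| eq_neg_of_add_eq_zero_left <|
    hx.column_relation (n := n) (m := m) (by omega) (abs_le.2 ⟨by omega, by omega⟩)
  simp only [norm_neg, norm_mul, norm_csqrt] at h
  set s := √(((n + m + 1) * (n + m + 2) : ℤ) : ℝ)
  set t := √(((n - m + 1) * (n - m + 2) : ℤ) : ℝ)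
  have hs : 0 < s :=
    Real.sqrt_pos.2 (by exact_mod_cast (by positivity : 0 < (n + m + 1) * (n + m + 2)))
  have hst : s ≤ t := Real.sqrt_le_sqrt (by
    exact_mod_cast (by nlinarith : (n + m + 1) * (n + m + 2) ≤ (n - m + 1) * (n - m + 2)))
  refine le_of_mul_le_mul_right ?_ hs
  calc ‖C n‖ * ‖x (n, m)‖ * s = ‖C n‖ * s * ‖x (n, m)‖ := by ring
    _ ≤ ‖C (n + 1)‖ * t * ‖x (n, m)‖ := by gcongr; exact norm_C_le_norm_C_add_one hn
    _ = ‖C (n + 2)‖ * ‖x (n + 2, m)‖ * s := by rw [← h]; ring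

lemma apply_eq_zero_of_nonpos_of_two_le (hx : FminusEqZero x)
    (hsupp : ∀ p : ℤ × ℤ, ¬ inS p → x p = 0)
    (hsum : Summable (fun p : ℤ × ℤ => ‖x p‖ ^ 2))
    {n m : ℤ} (hn : 2 ≤ n) (hm : m ≤ 0) : x (n, m) = 0 := by
  set a : ℕ → ℝ := fun j => ‖C (n + 2 * j)‖ * ‖x (n + 2 * j, m)‖
  have ha_mono : Monotone a := monotone_nat_of_le_succ fun j => by
    simpa [a, mul_add, add_assoc] using hx.norm_C_mul_norm_le hsupp (n := n + 2 * j) (by omega) hm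
  have ha_lim : Tendsto a atTop (𝓝 0) := by
    have h := tendsto_norm_comp_of_summable_sq hsum (f := fun j : ℕ => (n + 2 * j, m))
      fun i j hij => by simpa using hij
    exact squeeze_zero (fun j => by positivity)
      (fun j => mul_le_of_le_one_left (norm_nonneg _) (norm_C_le_one _)) h
  have h0 : ‖C n‖ * ‖x (n, m)‖ ≤ ‖C n‖ * 0 := by
    simpa [a] using ha_mono.ge_of_tendsto ha_lim 0
  exact norm_le_zero_iff.1 (le_of_mul_le_mul_left h0 (norm_pos_iff.2 (C_ne_zero hn)))

lemma apply_eq_zero_of_nonpos (hx : FminusEqZero x)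
    (hsupp : ∀ p : ℤ × ℤ, ¬ inS p → x p = 0)
    (hsum : Summable (fun p : ℤ × ℤ => ‖x p‖ ^ 2))
    {m : ℤ} (hm : m ≤ 0) (n : ℤ) : x (n, m) = 0 := by
  rcases lt_trichotomy n 1 with hn | rfl | hn
  · exact apply_eq_zero_of_lt hsupp (by omega)
  · rcases lt_or_ge m (-1) with hm1 | hm1
    · exact apply_eq_zero_of_lt hsupp (by omega)
    have h := hx.column_relation (n := 1) (m := m) zero_le_one (abs_le.2 ⟨by omega, by omega⟩)
    rw [hx.apply_eq_zero_of_nonpos_of_two_le hsupp hsum (n := 1 + 2) (by norm_num) hm, mul_zero,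
      zero_add] at h
    exact (mul_eq_zero.1 h).resolve_left
      (mul_ne_zero (C_ne_zero (by norm_num)) (csqrt_ne_zero (by nlinarith)))
  · exact hx.apply_eq_zero_of_nonpos_of_two_le hsupp hsum (by omega) hm

end FminusEqZero

/-- Every square-summable family `x` supported on `S` satisfying `ρ(F₋)x = 0`
coefficientwise is a scalar multiple of `ξ⁺`; in particular the space of
square-summable solutions of `ρ(F₋)x = 0` is (at most) one-dimensional. -/
theorem solutions_of_Fminus_eq_zero (x : ℤ × ℤ → ℂ)
    (hsupp : ∀ p : ℤ × ℤ, ¬ inS p → x p = 0)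
    (hsum : Summable (fun p : ℤ × ℤ => ‖x p‖ ^ 2))
    (heq : ∀ ℓ m : ℤ, 1 ≤ ℓ → |m| ≤ ℓ →
      C (ℓ + 1) * csqrt ((ℓ + m + 1) * (ℓ + m + 2)) * x (ℓ + 1, m + 1)
        + C ℓ * csqrt ((ℓ - m - 1) * (ℓ - m)) * x (ℓ - 1, m + 1) = 0) :
    ∃ lam : ℂ, ∀ p : ℤ × ℤ, x p = lam * xiplus p := by
  have hx : FminusEqZero x := heq
  refine ⟨x (1, 1), fun ⟨n, m⟩ => ?_⟩
  obtain rfl | hm := eq_or_ne m 1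
  · rw [xiplus_apply_one, hx.apply_one hsupp]
  rw [xiplus_of_ne_one hm, mul_zero]
  rcases le_or_gt m 0 with hm0 | hm0
  · exact hx.apply_eq_zero_of_nonpos hsupp hsum hm0 n
  · exact hx.apply_eq_zero_of_two_le hsupp (by omega) n

end
end
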